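/- arXiv:1912.07422 — 2 statements merged into one kernel-verified Lean document; each statement's English description precedes it below -/
import Mathlib

section
/- Let ρ ≥ 1. Then lim_{N→∞} E(H_N)/N = 1. -/
/-!
For `ρ ≥ 1` every weight `ρ^{-i} C(N-1,i)^{-1}` is at most `C(N-1,i)^{-1}`, so for `k < N` the
denominator of `P(H_N ≥ k)` is at most `∑_{i < N-1} C(N-1,i)^{-1}`. In this sum the term `i = 0`
is `1`, the terms `i = 1` and `i = N-2` are `1/(N-1)`, and the remaining binomials are at least
`C(N-1,2)`, so the sum is `1 + O(1/N)`. Hence `P(H_N ≥ k) = 1 - O(1/N)` uniformly in `1 ≤ k < N`,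
and since these probabilities are at most `1`, `E(H_N) = N (1 + o(1))`.
-/
open Finset Filter Real Topology

/-- `r_{ρ,n}(i) = ρ^{-i} * C(n-1, i)^{-1}`. -/
noncomputable def rfun (ρ : ℝ) (n i : ℕ) : ℝ := (ρ ^ i * (Nat.choose (n - 1) i : ℝ))⁻¹

/-- `P(H_N ≥ k)` for `k = 1,…,N`, and `0` for `k > N`. -/
noncomputable def tailP (ρ : ℝ) (N k : ℕ) : ℝ :=
  if k ≤ N then (∑ i ∈ Finset.range k, rfun ρ N i)⁻¹ else 0

/-- `P(H_N = k) = P(H_N ≥ k) − P(H_N ≥ k+1)`. -/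
noncomputable def pmfP (ρ : ℝ) (N k : ℕ) : ℝ := tailP ρ N k - tailP ρ N (k + 1)

/-- `E(H_N) = ∑_{k=1}^N P(H_N ≥ k)`. -/
noncomputable def EH (ρ : ℝ) (N : ℕ) : ℝ := ∑ k ∈ Finset.Icc 1 N, tailP ρ N k

/-- `Var(H_N) = ∑_{k=1}^N (k − E(H_N))² P(H_N = k)`. -/
noncomputable def VarH (ρ : ℝ) (N : ℕ) : ℝ :=
  ∑ k ∈ Finset.Icc 1 N, ((k : ℝ) - EH ρ N) ^ 2 * pmfP ρ N k

/-- `P(H_N ≤ t)` for a real threshold `t`. -/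
noncomputable def cdfP (ρ : ℝ) (N : ℕ) (t : ℝ) : ℝ :=
  ∑ k ∈ (Finset.Icc 1 N).filter (fun k : ℕ => (k : ℝ) ≤ t), pmfP ρ N k

theorem Nat.choose_monotoneOn_Iic_half (n : ℕ) : MonotoneOn n.choose (Set.Iic (n / 2)) :=
  monotoneOn_of_le_add_one Set.ordConnected_Iic fun _ _ _ ha =>
    Nat.choose_le_succ_of_lt_half_left (Nat.lt_of_succ_le ha)

theorem Nat.choose_two_le_choose {n i : ℕ} (h2 : 2 ≤ i) (hi : i ≤ n - 2) :
    n.choose 2 ≤ n.choose i := by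
  rcases le_or_gt i (n / 2) with hhalf | hhalf
  · exact n.choose_monotoneOn_Iic_half (Set.mem_Iic.2 (by omega)) hhalf h2
  · rw [← Nat.choose_symm (by omega : i ≤ n)]
    exact n.choose_monotoneOn_Iic_half (Set.mem_Iic.2 (by omega)) (Set.mem_Iic.2 (by omega))
      (by omega)

theorem sum_range_inv_choose_le (m : ℕ) :
    ∑ i ∈ range m, ((m.choose i : ℝ))⁻¹ ≤ 1 + 4 / m := by
  rcases lt_or_ge m 3 with hm | hm
  · interval_cases m <;> norm_num [sum_range_succ]
  obtain ⟨n, rfl⟩ : ∃ n, m = n + 3 := ⟨m - 3, by omega⟩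
  have hinner : ∑ i ∈ range n, (((n + 3).choose (i + 1 + 1) : ℕ) : ℝ)⁻¹ ≤ 2 / (n + 3) := by
    calc ∑ i ∈ range n, (((n + 3).choose (i + 1 + 1) : ℕ) : ℝ)⁻¹
        ≤ ∑ i ∈ range n, (((n + 3).choose 2 : ℕ) : ℝ)⁻¹ := by
          refine sum_le_sum fun i hi => ?_
          have hchoose := Nat.choose_two_le_choose (n := n + 3) (i := i + 1 + 1) le_add_self
            (by rw [mem_range] at hi; omega)
          gcongr
          exact_mod_cast Nat.choose_pos (by omega)
      _ = n * (2 / ((n + 3) * (n + 2))) := by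
          rw [sum_const, card_range, nsmul_eq_mul, Nat.cast_choose_two, inv_div]
          push_cast
          ring
      _ ≤ 2 / (n + 3) := by
          rw [mul_div_assoc', div_le_div_iff₀ (by positivity) (by positivity)]
          nlinarith
  have htop : (n + 3).choose (n + 2) = n + 3 := Nat.choose_succ_self_right (n + 2)
  rw [sum_range_succ, sum_range_succ', sum_range_succ', htop]
  simp only [Nat.choose_zero_right, Nat.choose_one_right, zero_add]
  have hsplit : (4 : ℝ) / (n + 3) = 2 / (n + 3) + ((n : ℝ) + 3)⁻¹ + ((n : ℝ) + 3)⁻¹ := by ring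
  push_cast
  linarith

theorem one_le_sum_range_inv_choose {m : ℕ} (hm : 1 ≤ m) :
    1 ≤ ∑ i ∈ range m, ((m.choose i : ℝ))⁻¹ := by
  calc (1 : ℝ) = ((m.choose 0 : ℝ))⁻¹ := by simp
    _ ≤ _ := single_le_sum (f := fun i => ((m.choose i : ℝ))⁻¹)
      (fun i _ => inv_nonneg.2 (Nat.cast_nonneg _)) (mem_range.2 hm)

theorem tendsto_sum_range_inv_choose :
    Tendsto (fun m : ℕ => ∑ i ∈ range m, ((m.choose i : ℝ))⁻¹) atTop (𝓝 1) := by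
  have hupper : Tendsto (fun m : ℕ => 1 + 4 / (m : ℝ)) atTop (𝓝 1) := by
    simpa using tendsto_const_nhds.add (tendsto_const_div_atTop_nhds_zero_nat (4 : ℝ))
  refine tendsto_of_tendsto_of_tendsto_of_le_of_le' tendsto_const_nhds hupper ?_
    (Eventually.of_forall sum_range_inv_choose_le)
  filter_upwards [eventually_ge_atTop 1] with m hm using one_le_sum_range_inv_choose hm

theorem rfun_nonneg {ρ : ℝ} (hρ : 0 ≤ ρ) (n i : ℕ) : 0 ≤ rfun ρ n i := by
  unfold rfun; positivity

theorem rfun_le_inv_choose {ρ : ℝ} (hρ : 1 ≤ ρ) (n i : ℕ) :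
    rfun ρ n i ≤ (((n - 1).choose i : ℕ) : ℝ)⁻¹ := by
  rw [rfun, mul_inv]
  exact mul_le_of_le_one_left (by positivity) (inv_le_one_of_one_le₀ (one_le_pow₀ hρ))

theorem one_le_sum_range_rfun {ρ : ℝ} (hρ : 0 ≤ ρ) (n : ℕ) {k : ℕ} (hk : 1 ≤ k) :
    1 ≤ ∑ i ∈ range k, rfun ρ n i :=
  calc (1 : ℝ) = rfun ρ n 0 := by simp [rfun]
    _ ≤ _ := single_le_sum (fun i _ => rfun_nonneg hρ n i) (mem_range.2 hk)

theorem tailP_le_one {ρ : ℝ} (hρ : 0 ≤ ρ) (N : ℕ) {k : ℕ} (hk : 1 ≤ k) : tailP ρ N k ≤ 1 := by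
  unfold tailP
  split_ifs
  · exact inv_le_one_of_one_le₀ (one_le_sum_range_rfun hρ N hk)
  · exact zero_le_one

theorem tailP_nonneg {ρ : ℝ} (hρ : 0 ≤ ρ) (N k : ℕ) : 0 ≤ tailP ρ N k := by
  unfold tailP
  split_ifs
  · exact inv_nonneg.2 (sum_nonneg fun i _ => rfun_nonneg hρ N i)
  · exact le_rfl

theorem EH_le {ρ : ℝ} (hρ : 0 ≤ ρ) (N : ℕ) : EH ρ N ≤ N := by
  calc EH ρ N ≤ ∑ _k ∈ Icc 1 N, (1 : ℝ) :=
        sum_le_sum fun k hk => tailP_le_one hρ N (mem_Icc.1 hk).1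
    _ = N := by simp

theorem inv_sum_range_inv_choose_le_tailP {ρ : ℝ} (hρ : 1 ≤ ρ) {N k : ℕ} (hk : 1 ≤ k)
    (hkN : k ≤ N) :
    (∑ i ∈ range N, ((N.choose i : ℝ))⁻¹)⁻¹ ≤ tailP ρ (N + 1) k := by
  have hρ0 : 0 ≤ ρ := zero_le_one.trans hρ
  rw [tailP, if_pos (by omega)]
  refine inv_anti₀ (zero_lt_one.trans_le (one_le_sum_range_rfun hρ0 _ hk)) ?_
  calc ∑ i ∈ range k, rfun ρ (N + 1) i ≤ ∑ i ∈ range N, rfun ρ (N + 1) i :=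
        sum_le_sum_of_subset_of_nonneg (range_subset_range.2 hkN)
          fun i _ _ => rfun_nonneg hρ0 _ i
    _ ≤ _ := sum_le_sum fun i _ => rfun_le_inv_choose hρ (N + 1) i

theorem mul_inv_sum_range_inv_choose_le_EH {ρ : ℝ} (hρ : 1 ≤ ρ) (N : ℕ) :
    N * (∑ i ∈ range N, ((N.choose i : ℝ))⁻¹)⁻¹ ≤ EH ρ (N + 1) := by
  calc (N : ℝ) * (∑ i ∈ range N, ((N.choose i : ℝ))⁻¹)⁻¹
      = ∑ _k ∈ Icc 1 N, (∑ i ∈ range N, ((N.choose i : ℝ))⁻¹)⁻¹ := by simp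
    _ ≤ ∑ k ∈ Icc 1 N, tailP ρ (N + 1) k :=
        sum_le_sum fun k hk =>
          inv_sum_range_inv_choose_le_tailP hρ (mem_Icc.1 hk).1 (mem_Icc.1 hk).2
    _ ≤ EH ρ (N + 1) :=
        sum_le_sum_of_subset_of_nonneg (Icc_subset_Icc_right N.le_succ)
          fun k _ _ => tailP_nonneg (zero_le_one.trans hρ) _ k

theorem mean_height_asymptotics_rho_ge_one (ρ : ℝ) (hρ : 1 ≤ ρ) :
    Tendsto (fun N : ℕ => EH ρ N / N) atTop (𝓝 1) := by
  rw [← tendsto_add_atTop_iff_nat 1]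
  have hlower : Tendsto (fun N : ℕ => (N : ℝ) / (N + 1) *
      (∑ i ∈ range N, ((N.choose i : ℝ))⁻¹)⁻¹) atTop (𝓝 1) := by
    simpa using (tendsto_natCast_div_add_atTop (1 : ℝ)).mul
      (tendsto_sum_range_inv_choose.inv₀ one_ne_zero)
  refine tendsto_of_tendsto_of_tendsto_of_le_of_le hlower tendsto_const_nhds (fun N => ?_)
    fun N => div_le_one_of_le₀ (EH_le (zero_le_one.trans hρ) _) (N + 1).cast_nonneg
  rw [div_mul_eq_mul_div, Nat.cast_add_one]
  gcongr
  exact mul_inv_sum_range_inv_choose_le_EH hρ N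
end

section
/- Let 0 < ρ < 1, let α ∈ (0,1) be the unique solution of x^x (1−x)^{1−x} = ρ^x, and set h_n = ⌊α(n−1)⌋. Then r_{ρ,n}(h_n) = Θ(√n): there exist constants 0 < c ≤ C and n₀ such that c√n ≤ r_{ρ,n}(h_n) ≤ C√n for all n ≥ n₀. -/
open Finset Filter Real Topology

/-!
Write `m = n - 1`, `h = ⌊α m⌋`, `k = m - h`, so that `r_{ρ,n}(h) = (ρ^h C(m,h))⁻¹`. Stirling's
formula, with the effective bounds `√π ≤ stirlingSeq j ≤ e / √2`, gives
`ρ^h C(m,h) ≍ √(m / (h k)) · exp (m φ(h / m))` with `φ x = x log ρ + binEntropy x`.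
The equation defining `α` says exactly `φ α = 0`; since `|h / m - α| ≤ 1 / m` and `φ` is
Lipschitz near `α`, the exponent `m φ(h / m)` stays bounded. As `h` and `k` are both of order `m`,
the square root is of order `1 / √m`, whence `r_{ρ,n}(h) ≍ √n`.
-/

open Stirling
open scoped Nat

theorem Stirling.stirlingSeq_le_exp_one_div_sqrt_two {n : ℕ} (hn : n ≠ 0) :
    stirlingSeq n ≤ exp 1 / √2 := by
  obtain ⟨k, rfl⟩ := Nat.exists_eq_succ_of_ne_zero hn
  simpa [stirlingSeq_one] using stirlingSeq'_antitone (Nat.zero_le k)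

theorem Stirling.stirlingSeq_pos {n : ℕ} (hn : n ≠ 0) : 0 < stirlingSeq n :=
  (Real.sqrt_pos.2 pi_pos).trans_le (sqrt_pi_le_stirlingSeq hn)

theorem Stirling.factorial_eq_stirlingSeq_mul {n : ℕ} (hn : n ≠ 0) :
    (n ! : ℝ) = stirlingSeq n * (√(2 * n) * (n / exp 1) ^ n) := by
  rw [stirlingSeq, div_mul_cancel₀]
  positivity

theorem Stirling.stirlingSeq_div_mul_stirlingSeq_mem_Icc {n h k : ℕ} (hn : n ≠ 0) (hh : h ≠ 0)
    (hk : k ≠ 0) :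
    stirlingSeq n / (stirlingSeq h * stirlingSeq k) ∈
      Set.Icc (√π / (exp 1 / √2) ^ 2) (exp 1 / √2 / √π ^ 2) := by
  rw [sq, sq]
  constructor
  · exact div_le_div₀ (stirlingSeq_pos hn).le (sqrt_pi_le_stirlingSeq hn)
      (mul_pos (stirlingSeq_pos hh) (stirlingSeq_pos hk))
      (mul_le_mul (stirlingSeq_le_exp_one_div_sqrt_two hh)
        (stirlingSeq_le_exp_one_div_sqrt_two hk) (stirlingSeq_pos hk).le (by positivity))
  · exact div_le_div₀ (by positivity) (stirlingSeq_le_exp_one_div_sqrt_two hn) (by positivity)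
      (mul_le_mul (sqrt_pi_le_stirlingSeq hh) (sqrt_pi_le_stirlingSeq hk) (by positivity)
        (stirlingSeq_pos hh).le)

theorem Nat.cast_add_choose_eq_stirlingSeq {h k : ℕ} (hh : h ≠ 0) (hk : k ≠ 0) :
    ((h + k).choose h : ℝ) = stirlingSeq (h + k) / (stirlingSeq h * stirlingSeq k) *
      √((h + k) / (2 * h * k)) * ((h + k) ^ (h + k) / ((h : ℝ) ^ h * (k : ℝ) ^ k)) := by
  rw [Nat.cast_add_choose, factorial_eq_stirlingSeq_mul hh, factorial_eq_stirlingSeq_mul hk,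
    factorial_eq_stirlingSeq_mul (by omega)]
  have := stirlingSeq_pos hh
  have := stirlingSeq_pos hk
  have hsq : √(2 * ((h + k : ℕ) : ℝ)) = √((h + k) / (2 * h * k)) * (√(2 * h) * √(2 * k)) := by
    rw [← sqrt_mul (by positivity), ← sqrt_mul (by positivity)]
    congr 1
    push_cast
    field_simp
  rw [hsq, div_pow, div_pow, div_pow, pow_add (exp 1)]
  push_cast
  field_simp

theorem pow_mul_pow_div_eq_exp_binEntropy {ρ : ℝ} (hρ : 0 < ρ) {h k : ℕ} (hh : h ≠ 0)
    (hk : k ≠ 0) :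
    ρ ^ h * ((h + k : ℝ) ^ (h + k) / ((h : ℝ) ^ h * (k : ℝ) ^ k)) =
      exp ((h + k) * (h / (h + k) * log ρ + binEntropy (h / (h + k)))) := by
  have hk' : 1 - h / (h + k : ℝ) = k / (h + k) := by field_simp; ring
  rw [← exp_log (by positivity :
    0 < ρ ^ h * ((h + k : ℝ) ^ (h + k) / ((h : ℝ) ^ h * (k : ℝ) ^ k)))]
  congr 1
  rw [log_mul (by positivity) (by positivity), log_div (by positivity) (by positivity),
    log_mul (by positivity) (by positivity)]
  simp only [Real.log_pow, binEntropy, hk', inv_div]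
  rw [log_div (by positivity) (by positivity), log_div (by positivity) (by positivity)]
  push_cast
  field_simp
  ring

theorem abs_binEntropy_sub_le {a b x y : ℝ} (ha : 0 < a) (hb : b < 1) (hx : x ∈ Set.Icc a b)
    (hy : y ∈ Set.Icc a b) :
    |binEntropy x - binEntropy y| ≤ (-log a - log (1 - b)) * |x - y| := by
  have hmem : ∀ p ∈ Set.Icc a b, 0 < p ∧ p < 1 := fun p hp =>
    ⟨ha.trans_le hp.1, hp.2.trans_lt hb⟩
  have hderiv : ∀ p ∈ Set.Icc a b, ‖deriv binEntropy p‖ ≤ -log a - log (1 - b) := by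
    intro p hp
    obtain ⟨hp0, hp1⟩ := hmem p hp
    have h1 : log a ≤ log p := log_le_log ha hp.1
    have h2 : log (1 - b) ≤ log (1 - p) := log_le_log (by linarith) (by linarith [hp.2])
    have h3 : log p ≤ 0 := log_nonpos hp0.le hp1.le
    have h4 : log (1 - p) ≤ 0 := log_nonpos (by linarith) (by linarith)
    rw [deriv_binEntropy, Real.norm_eq_abs, abs_le]
    constructor <;> linarith
  exact (convex_Icc a b).norm_image_sub_le_of_norm_deriv_le
    (fun p hp => differentiableAt_binEntropy (hmem p hp).1.ne' (hmem p hp).2.ne) hderiv hy hx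

theorem abs_mul_mul_log_add_binEntropy_le {ρ α x n : ℝ} (hα0 : 0 < α) (hα1 : α < 1)
    (hsol : α * log ρ + binEntropy α = 0) (hx : x ∈ Set.Icc (α / 2) α) (hn0 : 0 ≤ n)
    (hn : n * |x - α| ≤ 1) :
    |n * (x * log ρ + binEntropy x)| ≤ |log ρ| - log (α / 2) - log (1 - α) := by
  have hM : 0 ≤ -log (α / 2) - log (1 - α) := by
    linarith [log_nonpos (by positivity : 0 ≤ α / 2) (by linarith : α / 2 ≤ 1),
      log_nonpos (by linarith : 0 ≤ 1 - α) (by linarith : 1 - α ≤ 1)]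
  have hH := abs_binEntropy_sub_le (by positivity) hα1 hx ⟨by linarith, le_rfl⟩
  have hsplit : x * log ρ + binEntropy x = (x - α) * log ρ + (binEntropy x - binEntropy α) := by
    linear_combination hsol
  calc |n * (x * log ρ + binEntropy x)|
      ≤ n * (|x - α| * |log ρ| + (-log (α / 2) - log (1 - α)) * |x - α|) := by
        rw [abs_mul, abs_of_nonneg hn0, hsplit]
        gcongr
        exact (abs_add_le _ _).trans (by rw [abs_mul]; gcongr)
    _ = (|log ρ| - log (α / 2) - log (1 - α)) * (n * |x - α|) := by ring
    _ ≤ |log ρ| - log (α / 2) - log (1 - α) := by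
        have : 0 ≤ |log ρ| - log (α / 2) - log (1 - α) := by linarith [abs_nonneg (log ρ)]
        simpa using mul_le_mul_of_nonneg_left hn this

theorem sqrt_div_two_mul_mem_Icc {α : ℝ} {h k : ℕ} (hα1 : α < 1) (hh : h ≠ 0)
    (hle : (h : ℝ) ≤ α * (h + k)) (hge : α * (h + k) ≤ 2 * h) :
    √((h + k) / (2 * h * k)) ∈
      Set.Icc (√(1 / (2 * α)) / √(h + k)) (√(1 / (α * (1 - α))) / √(h + k)) := by
  have hh0 : (0 : ℝ) < h := by positivity
  have hα0 : 0 < α := by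
    by_contra! hα
    nlinarith [mul_nonpos_of_nonpos_of_nonneg hα (by positivity : (0 : ℝ) ≤ h + k)]
  have hk0 : (0 : ℝ) < k := by
    by_contra! hk
    nlinarith
  have hk : (1 - α) * (h + k) ≤ k := by linarith
  rw [← sqrt_div' _ (by positivity), ← sqrt_div' _ (by positivity)]
  constructor <;> apply sqrt_le_sqrt <;>
    rw [div_div, div_le_div_iff₀ (by positivity) (by positivity)]
  · nlinarith [mul_le_mul hle (by linarith : (k : ℝ) ≤ h + k) hk0.le (by positivity)]
  · nlinarith [mul_le_mul hge hk (by positivity) (by positivity)]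

/-- The hypotheses `hle` and `hlt` say that `h = ⌊α (h + k)⌋`. -/
theorem rho_pow_mul_add_choose_mem_Icc {ρ α : ℝ} (hρ : 0 < ρ) (hα1 : α < 1)
    (hsol : α * log ρ + binEntropy α = 0) {h k : ℕ}
    (hle : (h : ℝ) ≤ α * (h + k)) (hlt : α * (h + k) < h + 1) (htwo : 2 ≤ α * (h + k)) :
    ρ ^ h * ((h + k).choose h : ℝ) ∈ Set.Icc
      (√π / (exp 1 / √2) ^ 2 * √(1 / (2 * α)) *
        exp (-(|log ρ| - log (α / 2) - log (1 - α))) / √(h + k))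
      (exp 1 / √2 / √π ^ 2 * √(1 / (α * (1 - α))) *
        exp (|log ρ| - log (α / 2) - log (1 - α)) / √(h + k)) := by
  have hh : h ≠ 0 := by
    have : (1 : ℝ) < h := by linarith
    rintro rfl
    norm_num at this
  have hα0 : 0 < α := by
    by_contra! hα
    nlinarith [mul_nonpos_of_nonpos_of_nonneg hα (by positivity : (0 : ℝ) ≤ h + k)]
  have hk : k ≠ 0 := by
    rintro rfl
    have : (0 : ℝ) < h := by positivity
    push_cast at hle
    nlinarith
  have hn0 : (0 : ℝ) < h + k := by positivity
  have hx : (h : ℝ) / (h + k) ∈ Set.Icc (α / 2) α := by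
    constructor
    · rw [le_div_iff₀ hn0]; linarith
    · rw [div_le_iff₀ hn0]; linarith
  have hdist : (h + k) * |h / (h + k) - α| ≤ 1 := by
    rw [← abs_of_pos hn0, ← abs_mul, abs_of_pos hn0, mul_sub, mul_div_cancel₀ _ hn0.ne', abs_le]
    constructor <;> linarith
  obtain ⟨hE₁, hE₂⟩ := abs_le.1 (abs_mul_mul_log_add_binEntropy_le hα0 hα1 hsol hx hn0.le hdist)
  obtain ⟨hS₁, hS₂⟩ := stirlingSeq_div_mul_stirlingSeq_mem_Icc (by omega : h + k ≠ 0) hh hk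
  obtain ⟨hT₁, hT₂⟩ := sqrt_div_two_mul_mem_Icc hα1 hh hle (by linarith)
  have hS₀ : 0 ≤ stirlingSeq (h + k) / (stirlingSeq h * stirlingSeq k) :=
    le_trans (by positivity) hS₁
  have hdecomp : ρ ^ h * ((h + k).choose h : ℝ) =
      stirlingSeq (h + k) / (stirlingSeq h * stirlingSeq k) * √((h + k) / (2 * h * k)) *
        exp ((h + k) * (h / (h + k) * log ρ + binEntropy (h / (h + k)))) := by
    rw [Nat.cast_add_choose_eq_stirlingSeq hh hk, ← pow_mul_pow_div_eq_exp_binEntropy hρ hh hk]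
    ring
  rw [hdecomp]
  constructor
  · calc _ = √π / (exp 1 / √2) ^ 2 * (√(1 / (2 * α)) / √(h + k)) *
          exp (-(|log ρ| - log (α / 2) - log (1 - α))) := by ring
      _ ≤ _ := by gcongr
  · calc _ ≤ exp 1 / √2 / √π ^ 2 * (√(1 / (α * (1 - α))) / √(h + k)) *
          exp (|log ρ| - log (α / 2) - log (1 - α)) := by gcongr
      _ = _ := by ring

theorem exists_rho_pow_mul_choose_floor_mem_Icc {ρ α : ℝ} (hρ : 0 < ρ) (hα0 : 0 < α)
    (hα1 : α < 1) (hsol : α * log ρ + binEntropy α = 0) :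
    ∃ a b : ℝ, 0 < a ∧ 0 < b ∧ ∃ m₀ : ℕ, ∀ m ≥ m₀,
      ρ ^ ⌊α * m⌋₊ * (m.choose ⌊α * m⌋₊ : ℝ) ∈ Set.Icc (a / √m) (b / √m) := by
  refine ⟨_, _, ?_, ?_, ⌈2 / α⌉₊, fun m hm => by
    have htwo : 2 ≤ α * m := by
      rw [← div_le_iff₀' hα0]
      exact Nat.ceil_le.1 hm
    have hle : ⌊α * m⌋₊ ≤ m := Nat.floor_le_of_le (by nlinarith)
    have hfloor := Nat.floor_le (by positivity : 0 ≤ α * m)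
    have hlt := Nat.lt_floor_add_one (α * m)
    generalize ⌊α * m⌋₊ = h at hle hfloor hlt ⊢
    obtain ⟨k, rfl⟩ := Nat.exists_eq_add_of_le hle
    push_cast at htwo hfloor hlt ⊢
    exact rho_pow_mul_add_choose_mem_Icc hρ hα1 hsol hfloor hlt htwo⟩ <;> positivity

theorem mul_log_add_binEntropy_eq_zero_of_rpow_eq {ρ x : ℝ} (hρ : 0 < ρ) (hx : x ∈ Set.Ioo 0 1)
    (h : x ^ x * (1 - x) ^ (1 - x) = ρ ^ x) : x * log ρ + binEntropy x = 0 := by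
  have hx1 : 0 < 1 - x := sub_pos.2 hx.2
  have := congrArg log h
  rw [log_mul (rpow_pos_of_pos hx.1 _).ne' (rpow_pos_of_pos hx1 _).ne', log_rpow hx.1,
    log_rpow hx1, log_rpow hρ] at this
  rw [binEntropy, log_inv, log_inv]
  linarith

theorem rfun_succ (ρ : ℝ) (m i : ℕ) : rfun ρ (m + 1) i = (ρ ^ i * (m.choose i : ℝ))⁻¹ := rfl

theorem rfun_at_floor_theta_sqrt_general (ρ α : ℝ) (hρ0 : 0 < ρ)
    (hα : α ∈ Set.Ioo (0 : ℝ) 1)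
    (hsol : α ^ α * (1 - α) ^ (1 - α) = ρ ^ α) :
    ∃ c C : ℝ, ∃ n₀ : ℕ, 0 < c ∧ c ≤ C ∧
      ∀ n : ℕ, n₀ ≤ n →
        c * Real.sqrt n ≤ rfun ρ n ⌊α * ((n : ℝ) - 1)⌋₊ ∧
        rfun ρ n ⌊α * ((n : ℝ) - 1)⌋₊ ≤ C * Real.sqrt n := by
  obtain ⟨a, b, ha, hb, m₀, hX⟩ := exists_rho_pow_mul_choose_floor_mem_Icc hρ0 hα.1 hα.2
    (mul_log_add_binEntropy_eq_zero_of_rpow_eq hρ0 hα hsol)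
  have hbounds : ∀ n ≥ m₀ + 2, (√2 * b)⁻¹ * √n ≤ rfun ρ n ⌊α * ((n : ℝ) - 1)⌋₊ ∧
      rfun ρ n ⌊α * ((n : ℝ) - 1)⌋₊ ≤ a⁻¹ * √n := by
    intro n hn
    obtain ⟨m, rfl⟩ : ∃ m, n = m + 1 := ⟨n - 1, by omega⟩
    have hm : (0 : ℝ) < √m := Real.sqrt_pos.2 (by norm_cast; omega)
    have hm1 : √(m + 1 : ℕ) ≤ √2 * √m := by
      rw [← sqrt_mul zero_le_two]
      exact sqrt_le_sqrt (by push_cast; norm_cast; omega)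
    obtain ⟨hlo, hhi⟩ := hX m (by omega)
    rw [show ((m + 1 : ℕ) : ℝ) - 1 = m by push_cast; ring, rfun_succ]
    constructor
    · calc (√2 * b)⁻¹ * √(m + 1 : ℕ) ≤ (√2 * b)⁻¹ * (√2 * √m) := by gcongr
        _ = (b / √m)⁻¹ := by field_simp
        _ ≤ _ := inv_anti₀ (lt_of_lt_of_le (by positivity) hlo) hhi
    · calc _ ≤ (a / √m)⁻¹ := inv_anti₀ (by positivity) hlo
        _ = a⁻¹ * √m := by rw [inv_div, div_eq_inv_mul]
        _ ≤ a⁻¹ * √(m + 1 : ℕ) := by gcongr; simp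
  refine ⟨(√2 * b)⁻¹, a⁻¹, m₀ + 2, by positivity, ?_, hbounds⟩
  obtain ⟨hlo, hhi⟩ := hbounds (m₀ + 2) le_rfl
  exact le_of_mul_le_mul_right (hlo.trans hhi) (Real.sqrt_pos.2 (by positivity))

theorem rfun_at_floor_theta_sqrt (ρ α : ℝ) (hρ0 : 0 < ρ) (hρ1 : ρ < 1)
    (hα : α ∈ Set.Ioo (0 : ℝ) 1)
    (hsol : α ^ α * (1 - α) ^ (1 - α) = ρ ^ α)
    (huniq : ∀ x ∈ Set.Ioo (0 : ℝ) 1, x ^ x * (1 - x) ^ (1 - x) = ρ ^ x → x = α) :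
    ∃ c C : ℝ, ∃ n₀ : ℕ, 0 < c ∧ c ≤ C ∧
      ∀ n : ℕ, n₀ ≤ n →
        c * Real.sqrt n ≤ rfun ρ n ⌊α * ((n : ℝ) - 1)⌋₊ ∧
        rfun ρ n ⌊α * ((n : ℝ) - 1)⌋₊ ≤ C * Real.sqrt n :=
  rfun_at_floor_theta_sqrt_general ρ α hρ0 hα hsol
end
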